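/- Let 𝒜 denote the set of all product probability measures μ = ⊗_{i=1}^m μ_i on Ω_1 × ⋯ × Ω_m such that each μ_i is a probability measure on Ω_i satisfying μ_i(X_{i,j}) = M_{i,j} for every j = 1,…,K. For each i let C_i be a measurable subset of Ω_i, and let C = C_1 × ⋯ × C_m. Then inf_{μ∈𝒜} μ(C) = Π_{i=1}^m Σ_{j=1}^K M_{i,j} · 1[X_{i,j} ⊆ C_i], where 1[·] denotes the indicator of the stated condition. -/

import Mathlib

/-!
The bound `∑ j, 1[X j ⊆ C] M j ≤ ν C` holds for every admissible factor `ν`, since `C` contains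
the disjoint union of the cells `X j ⊆ C`. It is attained by putting the mass `M j` on one point
of each cell `X j`, chosen outside `C` whenever `X j ⊄ C`; the product of these discrete measures
attains the product of the bounds.
-/

open MeasureTheory
open scoped Classical ENNReal

section CellMeasures

variable {α ι : Type*}

theorem exists_mem_and_mem_iff_subset {X : ι → Set α} (hXne : ∀ j, (X j).Nonempty)
    (C : Set α) : ∃ p : ι → α, ∀ j, p j ∈ X j ∧ (p j ∈ C ↔ X j ⊆ C) := by
  refine ⟨fun j => if h : X j ⊆ C then (hXne j).some
    else (Set.not_subset.1 h).choose, fun j => ?_⟩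
  by_cases h : X j ⊆ C
  · simpa [h] using ⟨(hXne j).some_mem, h (hXne j).some_mem⟩
  · simpa [h] using (Set.not_subset.1 h).choose_spec

variable [MeasurableSpace α] [Fintype ι]

theorem sum_ite_subset_measure_le (ν : Measure α) {X : ι → Set α}
    (hXmeas : ∀ j, MeasurableSet (X j)) (hXdisj : Pairwise (Function.onFun Disjoint X))
    (C : Set α) :
    ∑ j, (if X j ⊆ C then ν (X j) else 0) ≤ ν C := by
  rw [← Finset.sum_filter, ← measure_biUnion_finset (fun a _ b _ hab => hXdisj hab)
    (fun j _ => hXmeas j)]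
  exact measure_mono (Set.iUnion₂_subset fun j hj => (Finset.mem_filter.1 hj).2)

theorem sum_smul_dirac_apply [MeasurableSingletonClass α] (w : ι → ℝ≥0∞) (p : ι → α)
    (s : Set α) :
    (∑ j, w j • Measure.dirac (p j)) s = ∑ j, if p j ∈ s then w j else 0 := by
  simp only [Measure.coe_finsetSum, Finset.sum_apply, Measure.smul_apply,
    Measure.dirac_apply, smul_eq_mul, Set.indicator_apply, Pi.one_apply, mul_ite, mul_one,
    mul_zero]

theorem exists_isProbabilityMeasure_apply_cell_eq_and_apply_eq [MeasurableSingletonClass α]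
    {X : ι → Set α} (hXne : ∀ j, (X j).Nonempty)
    (hXdisj : Pairwise (Function.onFun Disjoint X)) (w : ι → ℝ≥0∞) (hw : ∑ j, w j = 1)
    (C : Set α) :
    ∃ ν : Measure α, IsProbabilityMeasure ν ∧ (∀ j, ν (X j) = w j) ∧
      ν C = ∑ j, if X j ⊆ C then w j else 0 := by
  obtain ⟨p, hp⟩ := exists_mem_and_mem_iff_subset hXne C
  refine ⟨∑ j, w j • Measure.dirac (p j), ⟨?_⟩, fun j => ?_, ?_⟩
  · simpa [sum_smul_dirac_apply] using hw
  · rw [sum_smul_dirac_apply, Finset.sum_eq_single j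
      (fun k _ hkj => if_neg fun hk => (hXdisj hkj).ne_of_mem (hp k).1 hk rfl)
      (fun h => absurd (Finset.mem_univ j) h), if_pos (hp j).1]
  · simp only [sum_smul_dirac_apply, (hp _).2]

end CellMeasures

theorem inf_failure_probability_product_general
    (m K : ℕ)
    (Ω : Fin m → Type*) [∀ i, MeasurableSpace (Ω i)]
    [∀ i, MeasurableSingletonClass (Ω i)]
    (X : ∀ i, Fin K → Set (Ω i))
    (hXne : ∀ i j, (X i j).Nonempty)
    (hXmeas : ∀ i j, MeasurableSet (X i j))
    (hXdisj : ∀ i, Pairwise (Function.onFun Disjoint (X i)))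
    (M : Fin m → Fin K → ℝ)
    (hM0 : ∀ i j, 0 ≤ M i j) (hM1 : ∀ i, ∑ j, M i j = 1)
    (C : ∀ i, Set (Ω i)) :
    (⨅ μ ∈ {μ : Measure (∀ i, Ω i) | ∃ ν : ∀ i, Measure (Ω i),
        (∀ i, IsProbabilityMeasure (ν i)) ∧
        (∀ i j, ν i (X i j) = ENNReal.ofReal (M i j)) ∧
        μ = Measure.pi ν}, μ (Set.pi Set.univ C))
      = ∏ i, ∑ j, if X i j ⊆ C i then ENNReal.ofReal (M i j) else 0 := by
  have hw : ∀ i, ∑ j, ENNReal.ofReal (M i j) = 1 := fun i => by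
    rw [← ENNReal.ofReal_sum_of_nonneg fun j _ => hM0 i j, hM1 i, ENNReal.ofReal_one]
  choose ν hνprob hνX hνC using fun i =>
    exists_isProbabilityMeasure_apply_cell_eq_and_apply_eq (hXne i) (hXdisj i) _ (hw i) (C i)
  refine le_antisymm ?_ (le_iInf₂ ?_)
  · refine (iInf₂_le (Measure.pi ν) ⟨ν, hνprob, hνX, rfl⟩).trans_eq ?_
    rw [Measure.pi_pi]
    exact Finset.prod_congr rfl fun i _ => hνC i
  · rintro _ ⟨ν', _, hν'X, rfl⟩
    rw [Measure.pi_pi]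
    refine Finset.prod_le_prod' fun i _ => ?_
    simpa only [hν'X] using sum_ite_subset_measure_le (ν' i) (hXmeas i) (hXdisj i) (C i)

/-- Optimal lower bound on the failure probability for a product of
independent inputs, each constrained by zeroth-order moments on subdomains:
the infimum of `μ (C₁ × ⋯ × С_m)` over all admissible product measures
equals the product over `i` of the sums of the masses of the subdomains
contained in `C i`. -/
theorem inf_failure_probability_product
    (m K : ℕ) (hm : 0 < m) (hK : 0 < K)
    (Ω : Fin m → Type*) [∀ i, MeasurableSpace (Ω i)]
    [∀ i, MeasurableSingletonClass (Ω i)]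
    (X : ∀ i, Fin K → Set (Ω i))
    (hXne : ∀ i j, (X i j).Nonempty)
    (hXmeas : ∀ i j, MeasurableSet (X i j))
    (hXdisj : ∀ i, Pairwise (Function.onFun Disjoint (X i)))
    (hXcover : ∀ i, (⋃ j, X i j) = Set.univ)
    (M : Fin m → Fin K → ℝ)
    (hM0 : ∀ i j, 0 ≤ M i j) (hM1 : ∀ i, ∑ j, M i j = 1)
    (C : ∀ i, Set (Ω i)) (hC : ∀ i, MeasurableSet (C i)) :
    (⨅ μ ∈ {μ : Measure (∀ i, Ω i) | ∃ ν : ∀ i, Measure (Ω i),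
        (∀ i, IsProbabilityMeasure (ν i)) ∧
        (∀ i j, ν i (X i j) = ENNReal.ofReal (M i j)) ∧
        μ = Measure.pi ν}, μ (Set.pi Set.univ C))
      = ∏ i, ∑ j, if X i j ⊆ C i then ENNReal.ofReal (M i j) else 0 :=
  inf_failure_probability_product_general m K Ω X hXne hXmeas hXdisj M hM0 hM1 C
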